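/- arXiv:0810.4427 — 4 statements merged into one kernel-verified Lean document; each statement's English description precedes it below -/
import Mathlib

section
/- The map Ψ = ψ_2 ∘ ψ_1^{-1} : (0,1)^3 → (0,1)^3 satisfies, for every (y1, y2, y3) ∈ (0,1)^3, Ψ(y1, y2, y3) = ( y2 + (1-y1)(1-y2)y3 , y1·y2/(y2 + (1-y1)(1-y2)y3) , y1·y3/([1-(1-y1)y3]·[y2 + y3(1-y2)]) ), and Ψ is an involution, i.e., Ψ ∘ Ψ is the identity map on (0,1)^3. -/
open Set

/-- The set `H = {(x₁,x₂,x₃) ∈ (0,∞)³ : min{x₁x₂, (1-x₁)(1-x₂)} > x₃}`. -/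
def setH : Set (ℝ × ℝ × ℝ) :=
  {x | 0 < x.1 ∧ 0 < x.2.1 ∧ 0 < x.2.2 ∧
    x.2.2 < x.1 * x.2.1 ∧ x.2.2 < (1 - x.1) * (1 - x.2.1)}

/-- The open unit cube `(0,1)³`. -/
def unitCube : Set (ℝ × ℝ × ℝ) := Set.Ioo 0 1 ×ˢ (Set.Ioo 0 1 ×ˢ Set.Ioo 0 1)

/-- The map `ψ₁`. -/
noncomputable def psi1 (x : ℝ × ℝ × ℝ) : ℝ × ℝ × ℝ :=
  (x.1, (x.1 * x.2.1 - x.2.2) / x.1,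
   x.2.2 / ((1 - x.1) * (x.1 - x.1 * x.2.1 + x.2.2)))

/-- The map `ψ₂`. -/
noncomputable def psi2 (x : ℝ × ℝ × ℝ) : ℝ × ℝ × ℝ :=
  (x.2.1, (x.1 * x.2.1 - x.2.2) / x.2.1,
   x.2.2 / ((1 - x.2.1) * (x.2.1 - x.1 * x.2.1 + x.2.2)))

/-- The explicit formula (2.4) for `Ψ`. -/
noncomputable def PsiMap (y : ℝ × ℝ × ℝ) : ℝ × ℝ × ℝ :=
  (y.2.1 + (1 - y.1) * (1 - y.2.1) * y.2.2,
   y.1 * y.2.1 / (y.2.1 + (1 - y.1) * (1 - y.2.1) * y.2.2),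
   y.1 * y.2.2 / ((1 - (1 - y.1) * y.2.2) * (y.2.1 + y.2.2 * (1 - y.2.1))))

/-! Solving `ψ₁(x) = y` gives the polynomial inverse
`ψ₁⁻¹(y) = (y₁, y₂ + (1 - y₁)(1 - y₂)y₃, y₁(1 - y₁)(1 - y₂)y₃)`, and `ψ₂ = ψ₁ ∘ σ` for the
transposition `σ` of the first two coordinates, which preserves `H`. So `Ψ = ψ₁ ∘ σ ∘ ψ₁⁻¹` is
conjugate to an involution. The explicit formula is a direct computation of `ψ₂ ∘ ψ₁⁻¹`, and
`Ψ` preserves `(0,1)³` because `ψ₁⁻¹` maps `(0,1)³` into `H ∩ (0,1)³`, which `ψ₁` maps back into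
`(0,1)³` since `x₃ < (1 - x₁)(1 - x₂)`. -/

noncomputable def psi1Inv (y : ℝ × ℝ × ℝ) : ℝ × ℝ × ℝ :=
  (y.1, y.2.1 + (1 - y.1) * (1 - y.2.1) * y.2.2, y.1 * (1 - y.1) * (1 - y.2.1) * y.2.2)

def swap12 (x : ℝ × ℝ × ℝ) : ℝ × ℝ × ℝ := (x.2.1, x.1, x.2.2)

lemma swap12_swap12 (x : ℝ × ℝ × ℝ) : swap12 (swap12 x) = x := rfl

lemma psi2_eq_psi1_swap12 (x : ℝ × ℝ × ℝ) : psi2 x = psi1 (swap12 x) := by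
  simp only [psi1, psi2, swap12, mul_comm x.1 x.2.1]

lemma mapsTo_swap12 : MapsTo swap12 (setH ∩ unitCube) (setH ∩ unitCube) := by
  rintro ⟨a, b, c⟩ ⟨⟨ha, hb, hc, hab, hab'⟩, ⟨hA, hB, hC⟩⟩
  rw [mul_comm] at hab hab'
  exact ⟨⟨hb, ha, hc, hab, hab'⟩, ⟨hB, hA, hC⟩⟩

lemma one_sub_ne_zero_of_mem_setH {a b c : ℝ} (h : (a, b, c) ∈ setH) : 1 - a ≠ 0 :=
  left_ne_zero_of_mul (h.2.2.1.trans h.2.2.2.2).ne'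

lemma mul_one_sub_add_ne_zero_of_mem_setH {a b c : ℝ} (h : (a, b, c) ∈ setH) :
    a * (1 - b) + c ≠ 0 := by
  obtain ⟨ha, -, hc, -, hc'⟩ := h
  rcases lt_or_gt_of_ne (right_ne_zero_of_mul (hc.trans hc').ne') with hb | hb
  · -- here `1 - a < 0` as well, and `c < (1 - a)(1 - b)` gives `a(1 - b) + c < 1 - b`
    nlinarith
  · positivity

lemma PsiMap_eq_psi2_psi1Inv {y : ℝ × ℝ × ℝ} (h₁ : 1 - y.1 ≠ 0) (h₂ : 1 - y.2.1 ≠ 0) :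
    PsiMap y = psi2 (psi1Inv y) := by
  obtain ⟨a, b, c⟩ := y
  simp only [PsiMap, psi2, psi1Inv, Prod.mk.injEq, true_and]
  refine ⟨by ring, ?_⟩
  have hB : 1 - (b + (1 - a) * (1 - b) * c) = (1 - b) * (1 - (1 - a) * c) := by ring
  have hD : b + (1 - a) * (1 - b) * c - a * (b + (1 - a) * (1 - b) * c) +
      a * (1 - a) * (1 - b) * c = (1 - a) * (b + c * (1 - b)) := by ring
  rw [hB, hD, ← mul_div_mul_left (a * c) _ (mul_ne_zero h₂ h₁)]
  congr 1 <;> ring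

lemma leftInvOn_psi1Inv_psi1 : LeftInvOn psi1Inv psi1 setH := by
  rintro ⟨a, b, c⟩ hx
  have ha : a ≠ 0 := hx.1.ne'
  have ha1 := one_sub_ne_zero_of_mem_setH hx
  have hD := mul_one_sub_add_ne_zero_of_mem_setH hx
  simp only [psi1, psi1Inv, Prod.mk.injEq, true_and]
  constructor <;> field_simp <;> ring

lemma rightInvOn_psi1Inv_psi1 : RightInvOn psi1Inv psi1 unitCube := by
  rintro ⟨a, b, c⟩ ⟨⟨ha, ha_lt⟩, ⟨-, hb_lt⟩, -⟩
  dsimp only at *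
  have ha1 : 1 - a ≠ 0 := (sub_pos.2 ha_lt).ne'
  have hb1 : 1 - b ≠ 0 := (sub_pos.2 hb_lt).ne'
  have hD : a - a * (b + (1 - a) * (1 - b) * c) + a * (1 - a) * (1 - b) * c = a * (1 - b) := by
    ring
  simp only [psi1, psi1Inv, hD, Prod.mk.injEq, true_and]
  constructor <;> field_simp
  ring

lemma mapsTo_psi1Inv : MapsTo psi1Inv unitCube (setH ∩ unitCube) := by
  rintro ⟨a, b, c⟩ ⟨⟨ha, ha1⟩, ⟨hb, hb1⟩, ⟨hc, hc1⟩⟩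
  dsimp only at *
  have ha' : 0 < 1 - a := sub_pos.2 ha1
  have hb' : 0 < 1 - b := sub_pos.2 hb1
  set B := b + (1 - a) * (1 - b) * c
  set C := a * (1 - a) * (1 - b) * c
  have hB : 0 < B := by positivity
  have hB1 : B < 1 := by
    have h1B : 1 - B = (1 - b) * (1 - (1 - a) * c) := by ring
    have hac : 0 < 1 - (1 - a) * c := by nlinarith
    linarith [mul_pos hb' hac]
  have hCa : C < a * B := by
    have hdiff : a * B - C = a * b := by ring
    linarith [mul_pos ha hb]
  have hCa' : C < (1 - a) * (1 - B) := by
    have hdiff : (1 - a) * (1 - B) - C = (1 - a) * (1 - b) * (1 - c) := by ring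
    have hc' : 0 < 1 - c := sub_pos.2 hc1
    linarith [mul_pos (mul_pos ha' hb') hc']
  have hC : 0 < C := by positivity
  have hC1 : C < 1 := by nlinarith
  exact ⟨⟨ha, hB, hC, hCa, hCa'⟩, ⟨ha, ha1⟩, ⟨hB, hB1⟩, ⟨hC, hC1⟩⟩

lemma mapsTo_psi1 : MapsTo psi1 (setH ∩ unitCube) unitCube := by
  rintro ⟨a, b, c⟩ ⟨⟨ha, hb, hc, hab, hab'⟩, ⟨-, ha1⟩, ⟨-, hb1⟩, -⟩
  dsimp only [psi1] at *
  have hD : 0 < a - a * b + c := by nlinarith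
  have hden : 0 < (1 - a) * (a - a * b + c) := mul_pos (sub_pos.2 ha1) hD
  refine ⟨⟨ha, ha1⟩, ⟨div_pos (by linarith) ha, ?_⟩, ⟨div_pos hc hden, ?_⟩⟩
  · rw [div_lt_one ha]; linarith
  · rw [div_lt_one hden]; nlinarith

lemma PsiMap_psi1 {x : ℝ × ℝ × ℝ} (hx : x ∈ setH) : PsiMap (psi1 x) = psi2 x := by
  obtain ⟨a, b, c⟩ := x
  have h₂ : 1 - (a * b - c) / a ≠ 0 := by
    rw [one_sub_div hx.1.ne']
    exact div_ne_zero (fun h ↦ mul_one_sub_add_ne_zero_of_mem_setH hx (by linear_combination h))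
      hx.1.ne'
  rw [PsiMap_eq_psi2_psi1Inv (one_sub_ne_zero_of_mem_setH hx) h₂, leftInvOn_psi1Inv_psi1 hx]

lemma PsiMap_eq_psi1_swap12_psi1Inv {y : ℝ × ℝ × ℝ} (hy : y ∈ unitCube) :
    PsiMap y = psi1 (swap12 (psi1Inv y)) := by
  rw [← psi2_eq_psi1_swap12, ← PsiMap_psi1 (mapsTo_psi1Inv hy).1, rightInvOn_psi1Inv_psi1 hy]

/-- The map `Ψ = ψ₂ ∘ ψ₁⁻¹ : (0,1)³ → (0,1)³` is given by the explicit formula (2.4)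
(i.e. `Ψ ∘ ψ₁ = ψ₂` on `H`), it maps `(0,1)³` into itself, and it is an involution. -/
theorem Psi_formula_and_involution :
    (∀ x ∈ setH, PsiMap (psi1 x) = psi2 x) ∧
    Set.MapsTo PsiMap unitCube unitCube ∧
    (∀ y ∈ unitCube, PsiMap (PsiMap y) = y) := by
  refine ⟨fun x hx ↦ PsiMap_psi1 hx, fun y hy ↦ ?_, fun y hy ↦ ?_⟩
  · rw [PsiMap_eq_psi1_swap12_psi1Inv hy]
    exact mapsTo_psi1 (mapsTo_swap12 (mapsTo_psi1Inv hy))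
  · have hx : swap12 (psi1Inv y) ∈ setH := (mapsTo_swap12 (mapsTo_psi1Inv hy)).1
    rw [PsiMap_eq_psi1_swap12_psi1Inv hy, PsiMap_psi1 hx, psi2_eq_psi1_swap12, swap12_swap12,
      rightInvOn_psi1Inv_psi1 hy]
end

section
/- For i = 1, 2, the absolute value of the Jacobian determinant of the map ψ_i at a point (x1, x2, x3) ∈ H equals 1/((1-x_i)(x_i - x1·x2 + x3)). -/
/-!
A direct computation shows that the Jacobian determinant of `ψ₁` at `x` is
`1 / ((1 - x₁)(x₁ - x₁x₂ + x₃))`, which is positive on `H`. Since `ψ₂ = ψ₁ ∘ σ` for the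
transposition `σ` of the first two coordinates, which preserves `H` and has determinant `-1`,
the case of `ψ₂` follows from that of `ψ₁` by the chain rule.
-/

open Set

section LinearAlgebra

variable (R : Type*)

section Semiring

variable [Semiring R]

def prodFinThreeEquiv : (R × R × R) ≃ₗ[R] (Fin 3 → R) where
  toFun x := ![x.1, x.2.1, x.2.2]
  invFun v := (v 0, v 1, v 2)
  map_add' _ _ := by ext i; fin_cases i <;> rfl
  map_smul' _ _ := by ext i; fin_cases i <;> rfl
  left_inv _ := rfl
  right_inv _ := by ext i; fin_cases i <;> rfl

def swapFstSnd : (R × R × R) ≃ₗ[R] (R × R × R) where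
  toFun x := (x.2.1, x.1, x.2.2)
  invFun x := (x.2.1, x.1, x.2.2)
  map_add' _ _ := rfl
  map_smul' _ _ := rfl
  left_inv _ := rfl
  right_inv _ := rfl

end Semiring

variable {R} [CommRing R]

theorem LinearMap.det_prod_three (f : (R × R × R) →ₗ[R] R × R × R) :
    LinearMap.det f =
      !![(f (1, 0, 0)).1, (f (0, 1, 0)).1, (f (0, 0, 1)).1;
         (f (1, 0, 0)).2.1, (f (0, 1, 0)).2.1, (f (0, 0, 1)).2.1;
         (f (1, 0, 0)).2.2, (f (0, 1, 0)).2.2, (f (0, 0, 1)).2.2].det := by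
  rw [← LinearMap.det_toMatrix (Module.Basis.ofEquivFun (prodFinThreeEquiv R))]
  congr 1
  ext i j
  fin_cases i <;> fin_cases j <;> rfl

theorem det_swapFstSnd : LinearMap.det (swapFstSnd R : (R × R × R) →ₗ[R] R × R × R) = -1 := by
  simp [LinearMap.det_prod_three, Matrix.det_fin_three, swapFstSnd]

end LinearAlgebra

theorem swapFstSnd_mem_setH {x : ℝ × ℝ × ℝ} (hx : x ∈ setH) : swapFstSnd ℝ x ∈ setH := by
  obtain ⟨h₁, h₂, h₃, h₁₂, h₁₂'⟩ := hx
  exact ⟨h₂, h₁, h₃, by simpa [swapFstSnd, mul_comm] using h₁₂,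
    by simpa [swapFstSnd, mul_comm] using h₁₂'⟩

theorem denom_pos_of_mem_setH {x : ℝ × ℝ × ℝ} (hx : x ∈ setH) :
    0 < (1 - x.1) * (x.1 - x.1 * x.2.1 + x.2.2) := by
  obtain ⟨h₁, h₂, h₃, h₁₂, h₁₂'⟩ := hx
  nlinarith

theorem psi2_eq_psi1_comp_swapFstSnd :
    psi2 = psi1 ∘ (swapFstSnd ℝ).toContinuousLinearEquiv := by
  ext x <;> simp [psi1, psi2, swapFstSnd, mul_comm]

theorem det_fderiv_psi1 {x : ℝ × ℝ × ℝ} (hx : x.1 ≠ 0)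
    (hD : (1 - x.1) * (x.1 - x.1 * x.2.1 + x.2.2) ≠ 0) :
    LinearMap.det (fderiv ℝ psi1 x : (ℝ × ℝ × ℝ) →ₗ[ℝ] ℝ × ℝ × ℝ) =
      1 / ((1 - x.1) * (x.1 - x.1 * x.2.1 + x.2.2)) := by
  have hfst : HasFDerivAt (𝕜 := ℝ) (fun y : ℝ × ℝ × ℝ => y.1) _ x := hasFDerivAt_fst
  have hsnd : HasFDerivAt (𝕜 := ℝ) (fun y : ℝ × ℝ × ℝ => y.2.1) _ x := hasFDerivAt_snd.fst
  have hthd : HasFDerivAt (𝕜 := ℝ) (fun y : ℝ × ℝ × ℝ => y.2.2) _ x := hasFDerivAt_snd.snd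
  have hnum := (hfst.mul hsnd).sub hthd
  have hden := ((hasFDerivAt_const 1 x).sub hfst).mul ((hfst.sub (hfst.mul hsnd)).add hthd)
  have H : HasFDerivAt psi1 _ x := hfst.prodMk ((hnum.mul ((hasFDerivAt_inv hx).comp x hfst)).prodMk
    (hthd.mul ((hasFDerivAt_inv hD).comp x hden)))
  obtain ⟨h₁, h₂⟩ := mul_ne_zero_iff.mp hD
  rw [H.fderiv, LinearMap.det_prod_three, Matrix.det_fin_three]
  simp only [ContinuousLinearMap.coe_coe, ContinuousLinearMap.prod_apply, add_apply, sub_apply,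
    smul_apply, zero_apply, ContinuousLinearMap.comp_apply, ContinuousLinearMap.coe_fst',
    ContinuousLinearMap.coe_snd', ContinuousLinearMap.toSpanSingleton_apply, Pi.sub_apply,
    Function.comp_apply, smul_eq_mul, Matrix.of_apply, Matrix.cons_val]
  -- otherwise `field_simp` rewrites this factor into a form that `h₂` no longer matches
  generalize x.1 - x.1 * x.2.1 + x.2.2 = e at h₂ ⊢
  field_simp
  ring

theorem det_fderiv_psi2 {x : ℝ × ℝ × ℝ} (hx : x.2.1 ≠ 0)
    (hD : (1 - x.2.1) * (x.2.1 - x.1 * x.2.1 + x.2.2) ≠ 0) :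
    LinearMap.det (fderiv ℝ psi2 x : (ℝ × ℝ × ℝ) →ₗ[ℝ] ℝ × ℝ × ℝ) =
      -(1 / ((1 - x.2.1) * (x.2.1 - x.1 * x.2.1 + x.2.2))) := by
  rw [psi2_eq_psi1_comp_swapFstSnd, ContinuousLinearEquiv.comp_right_fderiv,
    ContinuousLinearMap.toLinearMap_comp, LinearMap.det_comp,
    det_fderiv_psi1 hx (by simpa [swapFstSnd, mul_comm] using hD),
    ContinuousLinearEquiv.toLinearMap_toContinuousLinearMap,
    LinearEquiv.toLinearEquiv_toContinuousLinearEquiv, det_swapFstSnd]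
  simp [swapFstSnd, mul_comm]

/-- The absolute value of the Jacobian determinant of `ψᵢ` at a point `x ∈ H` equals
`1 / ((1 - xᵢ)(xᵢ - x₁x₂ + x₃))`, for `i = 1, 2`. -/
theorem psi_jacobian :
    (∀ x ∈ setH,
      |LinearMap.det ((fderiv ℝ psi1 x) : (ℝ × ℝ × ℝ) →ₗ[ℝ] (ℝ × ℝ × ℝ))|
        = 1 / ((1 - x.1) * (x.1 - x.1 * x.2.1 + x.2.2))) ∧
    (∀ x ∈ setH,
      |LinearMap.det ((fderiv ℝ psi2 x) : (ℝ × ℝ × ℝ) →ₗ[ℝ] (ℝ × ℝ × ℝ))|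
        = 1 / ((1 - x.2.1) * (x.2.1 - x.1 * x.2.1 + x.2.2))) := by
  refine ⟨fun x hx => ?_, fun x hx => ?_⟩
  · have hD := denom_pos_of_mem_setH hx
    rw [det_fderiv_psi1 hx.1.ne' hD.ne', abs_of_pos (one_div_pos.2 hD)]
  · have hD : 0 < (1 - x.2.1) * (x.2.1 - x.1 * x.2.1 + x.2.2) := by
      simpa [swapFstSnd, mul_comm] using denom_pos_of_mem_setH (swapFstSnd_mem_setH hx)
    rw [det_fderiv_psi2 hx.2.1.ne' hD.ne', abs_neg, abs_of_pos (one_div_pos.2 hD)]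
end

section
/- Let p, q, r > 0 and let Y1 ~ B_I(p+r, q+r), Y2 ~ B_I(p, q+r), Y3 ~ B_I(r, q) be independent. Set (A, B) = ( -(1-Y2)·Y3 , Y2 + (1-Y2)·Y3 ). Then R := Y1 solves the stochastic fixed-point equation R =(in distribution)= A·R' + B, where R' is an independent copy of R independent of (A, B); i.e., if R' is independent of (A, B) and distributed as B_I(p+r, q+r), then A·R' + B is also distributed as B_I(p+r, q+r). -/
open MeasureTheory ProbabilityTheory Set

/-- The Euler beta function `B(a,b) = Γ(a)Γ(b)/Γ(a+b)`. -/
noncomputable def eulerBeta (a b : ℝ) : ℝ := Real.Gamma a * Real.Gamma b / Real.Gamma (a + b)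

/-- The univariate beta distribution `B_I(a,b)` on `(0,1)`. -/
noncomputable def betaMeasureI (a b : ℝ) : Measure ℝ :=
  MeasureTheory.volume.withDensity fun x =>
    ENNReal.ofReal ((Set.Ioo (0:ℝ) 1).indicator
      (fun x => x ^ (a - 1) * (1 - x) ^ (b - 1) / eulerBeta a b) x)

/-! With `W = (1 - Y₂)(1 - Y₃(1 - R'))` one has `A R' + B = 1 - W`. Beta laws are stable under
`x ↦ 1 - x`, which swaps the parameters, and under products of independent factors,
`B(a, b) · B(a + b, c) = B(a, b + c)`; the latter is checked on moments, which determine a law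
on `[0, 1]` by Weierstrass approximation. Hence `Y₃(1 - R') ∼ B(r, p + q + r)`,
`1 - Y₃(1 - R') ∼ B(p + q + r, r)`, `W ∼ B(q + r, p + r)` and `1 - W ∼ B(p + r, q + r)`. -/

namespace MeasureTheory

variable {μ ν : Measure ℝ} [IsFiniteMeasure μ] [IsFiniteMeasure ν] {a b : ℝ}

lemma integrable_of_continuousOn_of_ae_mem_Icc (hμ : ∀ᵐ x ∂μ, x ∈ Icc a b) {f : ℝ → ℝ}
    (hf : ContinuousOn f (Icc a b)) : Integrable f μ := by
  simpa [IntegrableOn, Measure.restrict_eq_self_of_ae_mem hμ] using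
    hf.integrableOn_compact (μ := μ) isCompact_Icc

lemma integral_eval_eq_of_integral_pow_eq (hμ : ∀ᵐ x ∂μ, x ∈ Icc a b)
    (hν : ∀ᵐ x ∂ν, x ∈ Icc a b) (h : ∀ n : ℕ, ∫ x, x ^ n ∂μ = ∫ x, x ^ n ∂ν) (P : Polynomial ℝ) :
    ∫ x, P.eval x ∂μ = ∫ x, P.eval x ∂ν := by
  induction P using Polynomial.induction_on' with
  | add P Q hP hQ =>
    have hint {κ : Measure ℝ} [IsFiniteMeasure κ] (hκ : ∀ᵐ x ∂κ, x ∈ Icc a b) (R : Polynomial ℝ) :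
        Integrable (fun x => R.eval x) κ :=
      integrable_of_continuousOn_of_ae_mem_Icc hκ R.continuous.continuousOn
    simp only [Polynomial.eval_add]
    rw [integral_add (hint hμ P) (hint hμ Q), integral_add (hint hν P) (hint hν Q), hP, hQ]
  | monomial n c =>
    simp only [Polynomial.eval_monomial]
    rw [integral_const_mul, integral_const_mul, h n]

theorem ext_of_forall_integral_pow_eq (hμ : ∀ᵐ x ∂μ, x ∈ Icc a b) (hν : ∀ᵐ x ∂ν, x ∈ Icc a b)
    (h : ∀ n : ℕ, ∫ x, x ^ n ∂μ = ∫ x, x ^ n ∂ν) : μ = ν := by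
  refine ext_of_forall_integral_eq_of_IsFiniteMeasure fun f => eq_of_forall_dist_le fun ε hε => ?_
  set C := μ.real univ + ν.real univ + 1
  have hC : 0 < C := by positivity
  obtain ⟨P, hP⟩ := exists_polynomial_near_of_continuousOn a b f f.continuous.continuousOn
    (ε / C) (by positivity)
  have approx {κ : Measure ℝ} [IsFiniteMeasure κ] (hκ : ∀ᵐ x ∂κ, x ∈ Icc a b) :
      dist (∫ x, f x ∂κ) (∫ x, P.eval x ∂κ) ≤ ε / C * κ.real univ := by
    rw [dist_eq_norm, ← integral_sub (f.integrable κ)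
      (integrable_of_continuousOn_of_ae_mem_Icc hκ P.continuous.continuousOn)]
    refine norm_integral_le_of_norm_le_const (hκ.mono fun x hx => ?_)
    rw [Real.norm_eq_abs, abs_sub_comm]
    exact (hP x hx).le
  calc dist (∫ x, f x ∂μ) (∫ x, f x ∂ν)
      ≤ dist (∫ x, f x ∂μ) (∫ x, P.eval x ∂μ) + dist (∫ x, f x ∂ν) (∫ x, P.eval x ∂ν) := by
        rw [integral_eval_eq_of_integral_pow_eq hμ hν h P, dist_comm (∫ x, f x ∂ν)]
        exact dist_triangle _ _ _
    _ ≤ ε / C * μ.real univ + ε / C * ν.real univ := add_le_add (approx hμ) (approx hν)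
    _ ≤ ε := by
        rw [← mul_add, div_mul_eq_mul_div, div_le_iff₀ hC]
        nlinarith

end MeasureTheory

lemma betaMeasureI_eq_betaMeasure (a b : ℝ) : betaMeasureI a b = betaMeasure a b := by
  unfold betaMeasureI betaMeasure
  congr 1 with x
  by_cases hx : x ∈ Ioo 0 1
  · rw [indicator_of_mem hx, betaPDF_of_pos_lt_one hx.1 hx.2, eulerBeta, beta]
    ring_nf
  · rw [indicator_of_notMem hx, betaPDF_eq, if_neg (show ¬(0 < x ∧ x < 1) from hx)]

namespace ProbabilityTheory

lemma measurable_betaPDF (α β : ℝ) : Measurable (betaPDF α β) :=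
  (measurable_betaPDFReal α β).ennreal_ofReal

lemma betaPDFReal_nonneg {α β : ℝ} (hα : 0 < α) (hβ : 0 < β) (x : ℝ) : 0 ≤ betaPDFReal α β x := by
  by_cases hx : 0 < x ∧ x < 1
  · exact (betaPDFReal_pos hx.1 hx.2 hα hβ).le
  · rw [betaPDFReal, if_neg hx]

lemma integral_betaPDFReal {α β : ℝ} (hα : 0 < α) (hβ : 0 < β) : ∫ x, betaPDFReal α β x = 1 := by
  rw [integral_eq_lintegral_of_nonneg_ae (.of_forall (betaPDFReal_nonneg hα hβ))
    (stronglyMeasurable_betaPDFReal α β).aestronglyMeasurable]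
  simp [← betaPDF.eq_def, lintegral_betaPDF_eq_one hα hβ]

lemma ae_mem_Icc_betaMeasure (α β : ℝ) : ∀ᵐ x ∂betaMeasure α β, x ∈ Icc 0 1 := by
  refine (ae_withDensity_iff (measurable_betaPDF α β)).2 (.of_forall fun x hx => ?_)
  refine Ioo_subset_Icc_self (not_not.1 fun hx' => hx ?_)
  rw [betaPDF, betaPDFReal, if_neg (show ¬(0 < x ∧ x < 1) from hx'), ENNReal.ofReal_zero]

lemma integral_pow_betaMeasure {α β : ℝ} (hα : 0 < α) (hβ : 0 < β) (n : ℕ) :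
    ∫ x, x ^ n ∂betaMeasure α β
      = Real.Gamma (α + n) * Real.Gamma (α + β) / (Real.Gamma α * Real.Gamma (α + β + n)) := by
  have hαn : 0 < α + n := by positivity
  have hshift : ∀ x, (betaPDF α β x).toReal • x ^ n
      = beta (α + n) β / beta α β * betaPDFReal (α + n) β x := by
    intro x
    rw [betaPDF, ENNReal.toReal_ofReal (betaPDFReal_nonneg hα hβ x), smul_eq_mul, betaPDFReal,
      betaPDFReal]
    split_ifs with hx
    · rw [show α + n - 1 = α - 1 + n by ring, Real.rpow_add_natCast hx.1.ne']
      field_simp [(beta_pos hα hβ).ne', (beta_pos hαn hβ).ne']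
    · simp
  rw [betaMeasure, integral_withDensity_eq_integral_toReal_smul
    (measurable_betaPDF α β) (.of_forall fun _ => ENNReal.ofReal_lt_top)]
  simp_rw [hshift]
  rw [integral_const_mul, integral_betaPDFReal hαn hβ, mul_one, beta, beta,
    show α + n + β = α + β + n by ring]
  have := Real.Gamma_pos_of_pos hβ
  have := Real.Gamma_pos_of_pos (add_pos hα hβ)
  have := Real.Gamma_pos_of_pos hα
  field_simp

lemma betaPDF_one_sub (α β x : ℝ) : betaPDF β α (1 - x) = betaPDF α β x := by
  rw [betaPDF_eq, betaPDF_eq, beta, beta, sub_sub_cancel, add_comm β, mul_comm (Real.Gamma β)]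
  congr 1
  refine if_congr ⟨fun h => ⟨by linarith, by linarith⟩, fun h => ⟨by linarith, by linarith⟩⟩ ?_ rfl
  ring

lemma map_one_sub_betaMeasure (α β : ℝ) :
    (betaMeasure α β).map (fun x => 1 - x) = betaMeasure β α := by
  have hrefl : Measurable fun x : ℝ => 1 - x := by fun_prop
  ext s hs
  rw [Measure.map_apply hrefl hs, betaMeasure, betaMeasure, withDensity_apply _ (hrefl hs),
    withDensity_apply _ hs,
    ← (Measure.measurePreserving_sub_left volume 1).setLIntegral_comp_preimage hs
      (measurable_betaPDF β α)]
  simp_rw [betaPDF_one_sub]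

theorem map_mul_prod_betaMeasure {α β γ : ℝ} (hα : 0 < α) (hβ : 0 < β) (hγ : 0 < γ) :
    ((betaMeasure α β).prod (betaMeasure (α + β) γ)).map (fun z => z.1 * z.2)
      = betaMeasure α (β + γ) := by
  have := isProbabilityMeasureBeta hα hβ
  have := isProbabilityMeasureBeta (add_pos hα hβ) hγ
  have := isProbabilityMeasureBeta hα (add_pos hβ hγ)
  have hmul : Measurable fun z : ℝ × ℝ => z.1 * z.2 := by fun_prop
  refine ext_of_forall_integral_pow_eq ?_ (ae_mem_Icc_betaMeasure _ _) fun n => ?_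
  · refine (ae_map_iff hmul.aemeasurable measurableSet_Icc).2 ?_
    filter_upwards [Measure.quasiMeasurePreserving_fst.ae (ae_mem_Icc_betaMeasure α β),
      Measure.quasiMeasurePreserving_snd.ae (ae_mem_Icc_betaMeasure (α + β) γ)]
      with z h1 h2
    exact ⟨mul_nonneg h1.1 h2.1, mul_le_one₀ h1.2 h2.1 h2.2⟩
  · rw [integral_map hmul.aemeasurable (by fun_prop)]
    simp_rw [mul_pow]
    rw [integral_prod_mul (fun x : ℝ => x ^ n) (fun y : ℝ => y ^ n), integral_pow_betaMeasure hα hβ,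
      integral_pow_betaMeasure (add_pos hα hβ) hγ, integral_pow_betaMeasure hα (add_pos hβ hγ),
      ← add_assoc]
    have := Real.Gamma_pos_of_pos hα
    have := Real.Gamma_pos_of_pos (add_pos hα hβ)
    have := Real.Gamma_pos_of_pos (show 0 < α + β + n by positivity)
    have := Real.Gamma_pos_of_pos (show 0 < α + β + γ + n by positivity)
    field_simp

variable {Ω : Type*} [MeasurableSpace Ω] {μ : Measure Ω} {X Y : Ω → ℝ} {α β γ : ℝ}

lemma map_one_sub_eq_betaMeasure (hX : Measurable X) (hXlaw : μ.map X = betaMeasure α β) :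
    μ.map (fun ω => 1 - X ω) = betaMeasure β α := by
  rw [show (fun ω => 1 - X ω) = (fun x => 1 - x) ∘ X from rfl, ← Measure.map_map (by fun_prop) hX,
    hXlaw, map_one_sub_betaMeasure]

lemma IndepFun.map_mul_eq_betaMeasure [IsFiniteMeasure μ] (hXY : IndepFun X Y μ)
    (hX : Measurable X) (hY : Measurable Y) (hα : 0 < α) (hβ : 0 < β) (hγ : 0 < γ)
    (hXlaw : μ.map X = betaMeasure α β) (hYlaw : μ.map Y = betaMeasure (α + β) γ) :
    μ.map (fun ω => X ω * Y ω) = betaMeasure α (β + γ) := by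
  rw [← map_mul_prod_betaMeasure hα hβ hγ, ← hXlaw, ← hYlaw,
    ← hXY.map_prod_eq_prod_map_map hX.aemeasurable hY.aemeasurable,
    Measure.map_map (by fun_prop) (hX.prodMk hY)]
  rfl

end ProbabilityTheory

/-- The perpetuity equation (5.2): with `(A,B) = (-(1-Y₂)Y₃, Y₂ + (1-Y₂)Y₃)` built from
independent `Y₂ ∼ B_I(p,q+r)` and `Y₃ ∼ B_I(r,q)`, and `R'` independent of `(A,B)` with
`R' ∼ B_I(p+r,q+r)`, the random variable `A·R' + B` is again `B_I(p+r,q+r)`-distributed;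
that is, `R ≝ Y₁ ∼ B_I(p+r,q+r)` solves `R =ᵈ A·R + B`. -/
theorem perpetuity_eq_R
    {Ω : Type*} [MeasurableSpace Ω] (μ : Measure Ω) [IsProbabilityMeasure μ]
    (p q r : ℝ) (hp : 0 < p) (hq : 0 < q) (hr : 0 < r)
    (Y₂ Y₃ R' : Ω → ℝ) (hY₂ : Measurable Y₂) (hY₃ : Measurable Y₃) (hR' : Measurable R')
    (hindep : iIndepFun ![Y₂, Y₃, R'] μ)
    (h2 : Measure.map Y₂ μ = betaMeasureI p (q + r))
    (h3 : Measure.map Y₃ μ = betaMeasureI r q)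
    (hR'law : Measure.map R' μ = betaMeasureI (p + r) (q + r)) :
    Measure.map (fun ω =>
        (-((1 - Y₂ ω) * Y₃ ω)) * R' ω + (Y₂ ω + (1 - Y₂ ω) * Y₃ ω)) μ
      = betaMeasureI (p + r) (q + r) := by
  simp only [betaMeasureI_eq_betaMeasure] at h2 h3 hR'law ⊢
  have hmeas : ∀ i, Measurable (![Y₂, Y₃, R'] i) := by
    intro i; fin_cases i <;> assumption
  have hY₃R' : IndepFun Y₃ R' μ := by simpa using hindep.indepFun (i := 1) (j := 2) (by decide)
  have hY₂Y₃R' : IndepFun Y₂ (fun ω => (Y₃ ω, R' ω)) μ :=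
    (by simpa using hindep.indepFun_prodMk hmeas 1 2 0 (by decide) (by decide) :
      IndepFun (fun ω => (Y₃ ω, R' ω)) Y₂ μ).symm
  have hY₃_one_sub_R' : IndepFun Y₃ (fun ω => 1 - R' ω) μ :=
    hY₃R'.comp measurable_id (measurable_const_sub 1)
  have hW_factors : IndepFun (fun ω => 1 - Y₂ ω) (fun ω => 1 - Y₃ ω * (1 - R' ω)) μ :=
    hY₂Y₃R'.comp (measurable_const_sub 1)
      (by fun_prop : Measurable fun v : ℝ × ℝ => 1 - v.1 * (1 - v.2))
  have h1R' : μ.map (fun ω => 1 - R' ω) = betaMeasure (r + q) (p + r) := by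
    rw [map_one_sub_eq_betaMeasure hR' hR'law, add_comm q r]
  have hV : μ.map (fun ω => 1 - Y₃ ω * (1 - R' ω)) = betaMeasure (q + r + p) r := by
    rw [map_one_sub_eq_betaMeasure (by fun_prop)
      (hY₃_one_sub_R'.map_mul_eq_betaMeasure hY₃ (by fun_prop) hr hq (by positivity) h3 h1R'),
      show q + (p + r) = q + r + p by ring]
  have hW : μ.map (fun ω => (1 - Y₂ ω) * (1 - Y₃ ω * (1 - R' ω))) = betaMeasure (q + r) (p + r) :=
    hW_factors.map_mul_eq_betaMeasure (by fun_prop) (by fun_prop) (by positivity) hp hr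
      (map_one_sub_eq_betaMeasure hY₂ h2) hV
  rw [← map_one_sub_eq_betaMeasure (by fun_prop) hW]
  congr with ω
  ring
end

section
/- Let G : (0,1) → ℝ be a function and G0 a real constant such that for all x, y ∈ (0,1), G0 - G(y) - (1-x)·G(x) = -(1-x)·G(x + y - x·y). Then there exists a constant C such that G(x) = -C + (C + G0)/(1-x) for all x ∈ (0,1). -/
open Set

/-- The auxiliary functional equation (4.16): if `G : (0,1) → ℝ` and `G₀ ∈ ℝ` satisfy
`G₀ - G(y) - (1-x)G(x) = -(1-x)G(x + y - xy)` for all `x, y ∈ (0,1)`, then there is a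
constant `C` with `G(x) = -C + (C + G₀)/(1-x)` on `(0,1)`. -/
theorem G_functional_equation
    (G : ℝ → ℝ) (G₀ : ℝ)
    (heq : ∀ x ∈ Set.Ioo (0:ℝ) 1, ∀ y ∈ Set.Ioo (0:ℝ) 1,
      G₀ - G y - (1 - x) * G x = -(1 - x) * G (x + y - x * y)) :
    ∃ C : ℝ, ∀ x ∈ Set.Ioo (0:ℝ) 1, G x = -C + (C + G₀) / (1 - x) := by
  refine ⟨G (1/2) - 2 * G₀, ?_⟩
  rintro x ⟨hx0, hx1⟩
  have hne : (1 - x) ≠ 0 := by linarith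
  have h1 := heq x ⟨hx0, hx1⟩ (1/2) (by norm_num)
  have h2 := heq (1/2) (by norm_num) x ⟨hx0, hx1⟩
  have harg : (1/2 : ℝ) + x - 1/2 * x = x + 1/2 - x * (1/2) := by ring
  rw [harg] at h2
  field_simp
  linear_combination h1 - (2*(1-x)) * h2
end
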